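/- Let q ≥ 2, and let r₁, ..., rₙ, s₁, ..., s_k be integers such that {±r₁, ..., ±rₙ, ±s₁, ..., ±s_k} is exactly a complete set of representatives of the units modulo q (so 2n + 2k = φ(q)). Let g be the block-diagonal rotation matrix with blocks Rot(rⱼ/q) and ḡ the one with blocks Rot(sⱼ/q). Then for any t with gcd(t, q) = 1, det(zI - g^t)·det(zI - ḡ^t) = Ψ_q(z), where Ψ_q is the polynomial ∏(z - η) over all primitive q-th roots of unity η. -/

import Mathlib

/-!
With `ψ = ZMod.stdAddChar`, `ψ x = exp (2πi x / q)`, the block `Rot (m / q) ^ t` has eigenvalues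
`ψ (t m)` and `ψ (-t m)`. The product of the two determinants is therefore `∏ (z - ψ (t u))` over
the residues `u = ±rⱼ, ±sₖ`, which by hypothesis run exactly once through the units of `ZMod q`.
Multiplication by the unit `t` permutes these units, and `ψ` maps them bijectively onto the
primitive `q`-th roots of unity.
-/

open Finset

/-- The 2×2 rotation matrix by angle `2πν`, viewed over `ℂ`. -/
noncomputable def Rot (ν : ℝ) : Matrix (Fin 2) (Fin 2) ℂ :=
  !![(Real.cos (2 * Real.pi * ν) : ℂ), (Real.sin (2 * Real.pi * ν) : ℂ);
     (-Real.sin (2 * Real.pi * ν) : ℂ), (Real.cos (2 * Real.pi * ν) : ℂ)]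

/-- The block-diagonal matrix with rotation blocks `Rot (v j / q)`. -/
noncomputable def blockRot {n : ℕ} (q : ℕ) (v : Fin n → ℤ) :
    Matrix (Fin 2 × Fin n) (Fin 2 × Fin n) ℂ :=
  Matrix.blockDiagonal (fun j => Rot ((v j : ℝ) / q))

open Complex Real

lemma Rot_add (a b : ℝ) : Rot a * Rot b = Rot (a + b) := by
  rw [Rot, Rot, Rot, Matrix.mul_fin_two, mul_add, Real.cos_add, Real.sin_add]
  push_cast
  congr 1
  simp only [Matrix.vecCons_inj, and_true]
  refine ⟨⟨?_, ?_⟩, ?_, ?_⟩ <;> ring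

lemma Rot_pow (a : ℝ) (t : ℕ) : Rot a ^ t = Rot (t * a) := by
  induction t with
  | zero => simp [Rot, Matrix.one_fin_two]
  | succ m ih => rw [pow_succ, ih, Rot_add]; push_cast; ring_nf

lemma det_smul_one_sub_Rot (a : ℝ) (z : ℂ) :
    (z • (1 : Matrix (Fin 2) (Fin 2) ℂ) - Rot a).det
      = (z - exp (2 * π * a * I)) * (z - exp (-(2 * π * a) * I)) := by
  rw [exp_mul_I, exp_mul_I, Complex.cos_neg, Complex.sin_neg, Matrix.det_fin_two, Rot]
  push_cast
  simp only [Matrix.sub_apply, Matrix.smul_apply, Matrix.one_fin_two, Matrix.of_apply,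
    Matrix.cons_val', Matrix.cons_val_zero, Matrix.cons_val_one, Matrix.cons_val_fin_one,
    smul_eq_mul]
  linear_combination Complex.sin (2 * π * a) ^ 2 * I_sq

lemma det_smul_one_sub_Rot_div_pow (q : ℕ) [NeZero q] (m : ℤ) (t : ℕ) (z : ℂ) :
    (z • (1 : Matrix (Fin 2) (Fin 2) ℂ) - Rot (m / q) ^ t).det
      = (z - ZMod.stdAddChar (t * m : ZMod q)) *
          (z - ZMod.stdAddChar (-(t * m) : ZMod q)) := by
  have hq : (q : ℂ) ≠ 0 := NeZero.ne _
  rw [Rot_pow, det_smul_one_sub_Rot,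
    show (t * m : ZMod q) = ((t * m : ℤ) : ZMod q) by push_cast; rfl,
    ← Int.cast_neg, ZMod.stdAddChar_coe, ZMod.stdAddChar_coe]
  congr 3 <;> push_cast <;> field_simp

lemma det_smul_one_sub_blockRot_pow (q : ℕ) [NeZero q] {n : ℕ} (v : Fin n → ℤ) (t : ℕ)
    (z : ℂ) :
    (z • (1 : Matrix (Fin 2 × Fin n) (Fin 2 × Fin n) ℂ) - blockRot q v ^ t).det
      = ∏ j, (z - ZMod.stdAddChar (t * v j : ZMod q)) *
          (z - ZMod.stdAddChar (-(t * v j) : ZMod q)) := by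
  rw [blockRot, ← Matrix.blockDiagonal_pow, ← Matrix.blockDiagonal_one,
    ← Matrix.blockDiagonal_smul, ← Matrix.blockDiagonal_sub, Matrix.det_blockDiagonal]
  exact Fintype.prod_congr _ _ fun j ↦ det_smul_one_sub_Rot_div_pow q (v j) t z

lemma Fintype.prod_comp_eq_prod_units {ι M β : Type*} [Fintype ι] [Monoid M] [Fintype Mˣ]
    [CommMonoid β] {g : ι → M} (hg : Function.Injective g)
    (hrange : Set.range g = {x | IsUnit x}) (f : M → β) :
    ∏ i, f (g i) = ∏ u : Mˣ, f u := by
  classical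
  have himage : univ.image g = univ.image ((↑) : Mˣ → M) := by
    apply coe_injective
    simp only [coe_image, coe_univ, Set.image_univ, hrange]
    rfl
  rw [← prod_image hg.injOn, himage, prod_image Units.val_injective.injOn]

lemma IsPrimitiveRoot.prod_units_pow_val {R β : Type*} [CommRing R] [IsDomain R]
    [CommMonoid β] {q : ℕ} [NeZero q] {ζ : R} (hζ : IsPrimitiveRoot ζ q) (f : R → β) :
    ∏ u : (ZMod q)ˣ, f (ζ ^ (u : ZMod q).val) = ∏ η ∈ primitiveRoots q R, f η := by
  have hq := NeZero.pos q
  refine prod_nbij (fun u ↦ ζ ^ (u : ZMod q).val) (fun u _ ↦ ?_) (fun u _ u' _ h ↦ ?_)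
    (fun η hη ↦ ?_) fun _ _ ↦ rfl
  · exact (mem_primitiveRoots hq).2 (hζ.pow_of_coprime _ (ZMod.val_coe_unit_coprime u))
  · exact Units.ext (ZMod.val_injective q (hζ.pow_inj (ZMod.val_lt _) (ZMod.val_lt _) h))
  · obtain ⟨i, hi, hco, rfl⟩ := hζ.isPrimitiveRoot_iff.1 ((mem_primitiveRoots hq).1 hη)
    refine ⟨ZMod.unitOfCoprime i hco, mem_coe.2 (mem_univ _), ?_⟩
    dsimp only
    rw [ZMod.coe_unitOfCoprime, ZMod.val_natCast, Nat.mod_eq_of_lt hi]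

lemma ZMod.prod_units_stdAddChar {β : Type*} [CommMonoid β] (q : ℕ) [NeZero q] (f : ℂ → β) :
    ∏ u : (ZMod q)ˣ, f (stdAddChar (u : ZMod q)) = ∏ η ∈ primitiveRoots q ℂ, f η := by
  have hζ : IsPrimitiveRoot (stdAddChar (1 : ZMod q)) q := by
    have h1 := stdAddChar_coe (N := q) 1
    rw [Int.cast_one, Int.cast_one, mul_one] at h1
    exact h1 ▸ Complex.isPrimitiveRoot_exp q (NeZero.ne q)
  rw [← hζ.prod_units_pow_val]
  simp_rw [← AddChar.map_nsmul_eq_pow, nsmul_one, natCast_zmod_val]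

theorem det_mul_det_eq_cyclotomic (q : ℕ) (hq : 2 ≤ q) (n k : ℕ)
    (r : Fin n → ℤ) (s : Fin k → ℤ)
    (hinj : Function.Injective (fun p : (Fin n ⊕ Fin k) × Bool =>
      (if p.2 then ((Sum.elim r s p.1 : ℤ) : ZMod q)
        else -((Sum.elim r s p.1 : ℤ) : ZMod q))))
    (hrange : Set.range (fun p : (Fin n ⊕ Fin k) × Bool =>
      (if p.2 then ((Sum.elim r s p.1 : ℤ) : ZMod q)
        else -((Sum.elim r s p.1 : ℤ) : ZMod q))) = {x : ZMod q | IsUnit x})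
    (t : ℕ) (ht : Nat.Coprime t q) (z : ℂ) :
    ((z • (1 : Matrix (Fin 2 × Fin n) (Fin 2 × Fin n) ℂ)
        - (blockRot q r) ^ t).det)
      * ((z • (1 : Matrix (Fin 2 × Fin k) (Fin 2 × Fin k) ℂ)
        - (blockRot q s) ^ t).det)
      = ∏ η ∈ primitiveRoots q ℂ, (z - η) := by
  have : NeZero q := ⟨by omega⟩
  let e : ZMod q → ℂ := fun x ↦ z - ZMod.stdAddChar ((t : ZMod q) * x)
  calc _ = ∏ p : (Fin n ⊕ Fin k) × Bool, e (if p.2 then ((Sum.elim r s p.1 : ℤ) : ZMod q)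
          else -((Sum.elim r s p.1 : ℤ) : ZMod q)) := by
        rw [det_smul_one_sub_blockRot_pow, det_smul_one_sub_blockRot_pow,
          Fintype.prod_prod_type, Fintype.prod_sum_type]
        simp [e]
    _ = ∏ u : (ZMod q)ˣ, e u := Fintype.prod_comp_eq_prod_units hinj hrange e
    _ = ∏ u : (ZMod q)ˣ, (z - ZMod.stdAddChar (u : ZMod q)) :=
        Equiv.prod_comp (Equiv.mulLeft (ZMod.unitOfCoprime t ht)) fun u ↦
          z - ZMod.stdAddChar (u : ZMod q)
    _ = ∏ η ∈ primitiveRoots q ℂ, (z - η) := ZMod.prod_units_stdAddChar q (z - ·)
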